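/- Let p, q ≥ 1 be integers and ε ∈ (0,1]. Set a = p²q + (3/4)q and δ = ε/(√2 · a). Let μ ∈ ℝ^q and let B = diag(b₁², …, b_q²) be a diagonal matrix with b_z > 0 for every z. Define l(y) = (1+δ)^{−a} Φ(y | μ, (1+δ)^{−1/4} B) and u(y) = (1+δ)^{a} Φ(y | μ, (1+δ) B). Then (1/2) ∫_{ℝ^q} (√(u(y)) − √(l(y)))² dy ≤ ε². -/

import Mathlib

/-
For probability densities `f, g` and constants `k, l ≥ 0`,
`∫ (√(k f) - √(l g))² = k + l - 2 √(k l) ∫ √(f g)`, and for Gaussians with common mean and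
diagonal covariances the Bhattacharyya coefficient `∫ √(f g)` factors over the coordinates as
`∏ √(2 √(v w) / (v + w))`. Writing `1 + δ = exp t`, the bracket has `k l = 1` and variance ratio
`exp (5t/4)` in every coordinate, so `∫ (√u - √l)² = 2 cosh (a t) - 2 cosh (5t/8) ^ (-q/2)` exactly.
Both terms are controlled by `cosh x ≤ exp (x² / 2)`, and `t ≤ δ` with `a δ = ε / √2` and `q ≤ a`.
-/

open Real MeasureTheory

/-- Gaussian density on `ℝ^q` with mean `μ` and diagonal covariance matrix whose
diagonal entries (variances) are given by `v`. -/
noncomputable def gaussDensity {q : ℕ} (μ v : Fin q → ℝ) (x : Fin q → ℝ) : ℝ :=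
  (2 * Real.pi) ^ (-(q : ℝ) / 2) * (∏ z, v z) ^ (-(1 : ℝ) / 2) *
    Real.exp (-(1 / 2) * ∑ z, (x z - μ z) ^ 2 / v z)

open ProbabilityTheory

lemma sqrt_gaussianPDFReal_mul {v w : ℝ} (hv : 0 < v) (hw : 0 < w) (m x : ℝ) :
    √(gaussianPDFReal m v.toNNReal x * gaussianPDFReal m w.toNNReal x) =
      √(2 * √(v * w) / (v + w)) * gaussianPDFReal m (2 * v * w / (v + w)).toNNReal x := by
  have hvw : 0 < v + w := by positivity
  simp only [gaussianPDFReal, coe_toNNReal _ hv.le, coe_toNNReal _ hw.le,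
    coe_toNNReal _ (by positivity : 0 ≤ 2 * v * w / (v + w))]
  rw [sqrt_eq_iff_eq_sq (by positivity) (by positivity), mul_pow, mul_pow, sq_sqrt (by positivity),
    inv_pow, sq_sqrt (by positivity), ← exp_nat_mul, sqrt_mul (by positivity) v,
    sqrt_mul (by positivity) w, sqrt_mul hv.le w,
    mul_mul_mul_comm, ← exp_add]
  have hexp : -(x - m) ^ 2 / (2 * v) + -(x - m) ^ 2 / (2 * w) =
      (2 : ℕ) * (-(x - m) ^ 2 / (2 * (2 * v * w / (v + w)))) := by
    field_simp
    ring
  rw [hexp]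
  have : 0 < √(2 * π) := by positivity
  have : 0 < √v := by positivity
  have : 0 < √w := by positivity
  field_simp
  rw [sq_sqrt (by positivity), sq_sqrt hv.le, sq_sqrt hw.le]

section Gaussian

variable {q : ℕ} {μ v w : Fin q → ℝ}

lemma gaussDensity_eq_prod (μ : Fin q → ℝ) (hv : ∀ z, 0 < v z) (y : Fin q → ℝ) :
    gaussDensity μ v y = ∏ z, gaussianPDFReal (μ z) (v z).toNNReal (y z) := by
  have h2π : (0 : ℝ) < 2 * π := by positivity
  have hconst : ∀ z, (√(2 * π * v z))⁻¹ = (2 * π) ^ (-(1 : ℝ) / 2) * v z ^ (-(1 : ℝ) / 2) := by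
    intro z
    rw [sqrt_eq_rpow, ← rpow_neg (mul_pos h2π (hv z)).le, mul_rpow h2π.le (hv z).le, neg_div]
  simp only [gaussianPDFReal, coe_toNNReal _ (hv _).le, Finset.prod_mul_distrib, hconst,
    Finset.prod_const, Finset.card_univ, Fintype.card_fin, ← exp_sum]
  rw [gaussDensity, ← rpow_natCast, ← rpow_mul h2π.le, finsetProd_rpow _ _ fun z _ => (hv z).le,
    Finset.mul_sum]
  congr 3
  · ring
  · funext z
    ring

lemma gaussDensity_nonneg (hv : ∀ z, 0 < v z) (y : Fin q → ℝ) : 0 ≤ gaussDensity μ v y := by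
  rw [gaussDensity_eq_prod μ hv]
  exact Finset.prod_nonneg fun z _ => gaussianPDFReal_nonneg _ _ _

lemma integrable_gaussDensity (hv : ∀ z, 0 < v z) : Integrable (gaussDensity μ v) := by
  rw [funext (gaussDensity_eq_prod μ hv)]
  exact Integrable.fintype_prod (f := fun z => gaussianPDFReal (μ z) (v z).toNNReal)
    fun z => integrable_gaussianPDFReal _ _

lemma integral_gaussDensity (hv : ∀ z, 0 < v z) : ∫ y, gaussDensity μ v y = 1 := by
  simp_rw [gaussDensity_eq_prod μ hv]
  rw [integral_fintype_prod_volume_eq_prod fun z => gaussianPDFReal (μ z) (v z).toNNReal]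
  exact Finset.prod_eq_one fun z _ => integral_gaussianPDFReal_eq_one _ (by simpa using hv z)

lemma sqrt_gaussDensity_mul (hv : ∀ z, 0 < v z) (hw : ∀ z, 0 < w z) (y : Fin q → ℝ) :
    √(gaussDensity μ v y * gaussDensity μ w y) =
      (∏ z, √(2 * √(v z * w z) / (v z + w z))) *
        gaussDensity μ (fun z => 2 * v z * w z / (v z + w z)) y := by
  have hvw : ∀ z, 0 < 2 * v z * w z / (v z + w z) := fun z => by
    have := hv z; have := hw z; positivity
  rw [gaussDensity_eq_prod μ hv, gaussDensity_eq_prod μ hw, gaussDensity_eq_prod μ hvw,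
    ← Finset.prod_mul_distrib, ← Finset.prod_mul_distrib,
    sqrt_prod _ fun z _ => mul_nonneg (gaussianPDFReal_nonneg _ _ _) (gaussianPDFReal_nonneg _ _ _)]
  exact Finset.prod_congr rfl fun z _ => sqrt_gaussianPDFReal_mul (hv z) (hw z) _ _

lemma integrable_sqrt_gaussDensity_mul (hv : ∀ z, 0 < v z) (hw : ∀ z, 0 < w z) :
    Integrable fun y => √(gaussDensity μ v y * gaussDensity μ w y) := by
  simp_rw [sqrt_gaussDensity_mul hv hw]
  exact (integrable_gaussDensity fun z => by have := hv z; have := hw z; positivity).const_mul _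

lemma integral_sqrt_gaussDensity_mul (hv : ∀ z, 0 < v z) (hw : ∀ z, 0 < w z) :
    ∫ y, √(gaussDensity μ v y * gaussDensity μ w y) =
      ∏ z, √(2 * √(v z * w z) / (v z + w z)) := by
  simp_rw [sqrt_gaussDensity_mul hv hw]
  rw [integral_const_mul, integral_gaussDensity fun z => by have := hv z; have := hw z; positivity,
    mul_one]

end Gaussian

lemma sq_sqrt_mul_sub_sqrt_mul {k l x y : ℝ} (hk : 0 ≤ k) (hl : 0 ≤ l) (hx : 0 ≤ x) (hy : 0 ≤ y) :
    (√(k * x) - √(l * y)) ^ 2 = k * x + l * y - 2 * √(k * l) * √(x * y) := by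
  rw [sub_sq, sq_sqrt (mul_nonneg hk hx), sq_sqrt (mul_nonneg hl hy), mul_assoc 2, mul_assoc 2,
    ← sqrt_mul (mul_nonneg hk hx), ← sqrt_mul (mul_nonneg hk hl), mul_mul_mul_comm k l]
  ring

lemma integral_sq_sqrt_mul_sub_sqrt_mul {α : Type*} [MeasurableSpace α] {ν : Measure α}
    {f g : α → ℝ} (hf₀ : 0 ≤ f) (hg₀ : 0 ≤ g) (hf : Integrable f ν) (hg : Integrable g ν)
    (hfg : Integrable (fun y => √(f y * g y)) ν) {k l : ℝ} (hk : 0 ≤ k) (hl : 0 ≤ l) :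
    ∫ y, (√(k * f y) - √(l * g y)) ^ 2 ∂ν =
      k * ∫ y, f y ∂ν + l * ∫ y, g y ∂ν - 2 * √(k * l) * ∫ y, √(f y * g y) ∂ν := by
  simp_rw [sq_sqrt_mul_sub_sqrt_mul hk hl (hf₀ _) (hg₀ _)]
  have hkl : Integrable (fun y => k * f y + l * g y) ν := (hf.const_mul k).add (hg.const_mul l)
  rw [integral_sub hkl (hfg.const_mul _), integral_add (hf.const_mul k) (hg.const_mul l),
    integral_const_mul, integral_const_mul, integral_const_mul]

lemma two_mul_sqrt_mul_div_add_eq_inv_cosh (t : ℝ) {b : ℝ} (hb : 0 < b) :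
    2 * √(exp t * b ^ 2 * (exp (t * (-1 / 4)) * b ^ 2)) /
        (exp t * b ^ 2 + exp (t * (-1 / 4)) * b ^ 2) = (cosh (5 / 8 * t))⁻¹ := by
  have h₁ : exp t = exp (3 / 8 * t) * exp (5 / 8 * t) := by rw [← exp_add]; ring_nf
  have h₂ : exp (t * (-1 / 4)) = exp (3 / 8 * t) * exp (-(5 / 8 * t)) := by
    rw [← exp_add]; ring_nf
  have h₃ : exp (5 / 8 * t) * exp (-(5 / 8 * t)) = 1 := by rw [← exp_add]; simp
  have hsq : exp t * b ^ 2 * (exp (t * (-1 / 4)) * b ^ 2) = (exp (3 / 8 * t) * b ^ 2) ^ 2 := by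
    rw [h₁, h₂]; linear_combination (exp (3 / 8 * t) * b ^ 2) ^ 2 * h₃
  rw [hsq, sqrt_sq (by positivity), cosh_eq, h₁, h₂]
  field_simp

lemma integral_sq_sqrt_sub_sqrt_bracket {q : ℕ} (μ : Fin q → ℝ) {b : Fin q → ℝ}
    (hb : ∀ z, 0 < b z) {c : ℝ} (hc : 0 < c) (a : ℝ) :
    ∫ y, (√(c ^ a * gaussDensity μ (fun z => c * b z ^ 2) y) -
        √(c ^ (-a) * gaussDensity μ (fun z => c ^ (-(1 : ℝ) / 4) * b z ^ 2) y)) ^ 2 =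
      2 * cosh (log c * a) - 2 * (√(cosh (5 / 8 * log c)))⁻¹ ^ q := by
  obtain ⟨t, rfl⟩ : ∃ t, exp t = c := ⟨log c, exp_log hc⟩
  have hv : ∀ z, 0 < exp t * b z ^ 2 := fun z => by have := hb z; positivity
  have hw : ∀ z, 0 < exp (t * (-1 / 4)) * b z ^ 2 := fun z => by have := hb z; positivity
  simp only [← exp_mul, log_exp]
  rw [integral_sq_sqrt_mul_sub_sqrt_mul (gaussDensity_nonneg hv) (gaussDensity_nonneg hw)
      (integrable_gaussDensity hv) (integrable_gaussDensity hw)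
      (integrable_sqrt_gaussDensity_mul hv hw) (exp_pos _).le (exp_pos _).le,
    integral_gaussDensity hv, integral_gaussDensity hw, integral_sqrt_gaussDensity_mul hv hw,
    ← exp_add, mul_neg, add_neg_cancel, exp_zero, sqrt_one,
    Finset.prod_congr rfl fun z _ => by
      rw [two_mul_sqrt_mul_div_add_eq_inv_cosh t (hb z), sqrt_inv],
    Finset.prod_const, Finset.card_univ, Fintype.card_fin, cosh_eq (t * a)]
  ring

lemma cosh_le_one_add_sq {x : ℝ} (hx : x ^ 2 ≤ 2) : cosh x ≤ 1 + x ^ 2 := by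
  have h := abs_sub_le_iff.1 (abs_exp_sub_one_sub_id_le (x := x ^ 2 / 2)
    (by rw [abs_of_nonneg (by positivity)]; linarith))
  nlinarith [cosh_le_exp_half_sq x, h.1]

lemma one_sub_le_inv_sqrt_cosh_pow (s : ℝ) (q : ℕ) :
    1 - q * s ^ 2 / 4 ≤ (√(cosh s))⁻¹ ^ q := by
  have hsqrt : √(cosh s) ≤ exp (s ^ 2 / 4) := by
    rw [show s ^ 2 / 4 = s ^ 2 / 2 / 2 by ring, exp_half]
    exact sqrt_le_sqrt (cosh_le_exp_half_sq s)
  calc 1 - q * s ^ 2 / 4 ≤ exp (q * -(s ^ 2 / 4)) := by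
        linarith [add_one_le_exp (q * -(s ^ 2 / 4))]
    _ = exp (-(s ^ 2 / 4)) ^ q := by rw [exp_nat_mul]
    _ ≤ (√(cosh s))⁻¹ ^ q := by
      gcongr
      rw [exp_neg]
      exact inv_anti₀ (sqrt_pos.2 (cosh_pos s)) hsqrt

/-- The squared Hellinger width of the bracket
`[l, u] = [(1+δ)^{-a} Φ(·|μ,(1+δ)^{-1/4}B), (1+δ)^{a} Φ(·|μ,(1+δ)B)]`,
with `a = p²q + (3/4)q`, `δ = ε/(√2 a)` and `B = diag(b₁²,…,b_q²)`, is at most `ε²`. -/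
theorem stmt_11 (p q : ℕ) (hp : 1 ≤ p) (hq : 1 ≤ q) (ε : ℝ) (hε0 : 0 < ε) (hε1 : ε ≤ 1)
    (a δ : ℝ) (ha : a = (p : ℝ) ^ 2 * q + 3 / 4 * q) (hδ : δ = ε / (Real.sqrt 2 * a))
    (μ b : Fin q → ℝ) (hb : ∀ z, 0 < b z) :
    (1 / 2) * ∫ y : Fin q → ℝ,
        (Real.sqrt ((1 + δ) ^ a * gaussDensity μ (fun z => (1 + δ) * b z ^ 2) y) -
          Real.sqrt ((1 + δ) ^ (-a) *
            gaussDensity μ (fun z => (1 + δ) ^ (-(1 : ℝ) / 4) * b z ^ 2) y)) ^ 2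
      ≤ ε ^ 2 := by
  have hqa : (q : ℝ) ≤ a := by
    have hp2 : (1 : ℝ) ≤ p ^ 2 := one_le_pow₀ (by exact_mod_cast hp)
    rw [ha]; nlinarith [mul_le_mul_of_nonneg_right hp2 (Nat.cast_nonneg (α := ℝ) q)]
  have ha1 : 1 ≤ a := le_trans (by exact_mod_cast hq) hqa
  have haδ : (a * δ) ^ 2 = ε ^ 2 / 2 := by
    rw [hδ]; field_simp; rw [sq_sqrt zero_le_two]
  have hδ0 : 0 < δ := by rw [hδ]; positivity
  set t := log (1 + δ)
  have ht0 : 0 ≤ t := log_nonneg (by linarith)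
  have htδ : t ≤ δ := by linarith [log_le_sub_one_of_pos (by linarith : 0 < 1 + δ)]
  have hat : (t * a) ^ 2 ≤ ε ^ 2 / 2 := by
    rw [← haδ, mul_comm t]; gcongr
  have hqt : q * (5 / 8 * t) ^ 2 / 4 ≤ ε ^ 2 / 2 := by
    have ht2 : t ^ 2 ≤ δ ^ 2 := by gcongr
    calc q * (5 / 8 * t) ^ 2 / 4 ≤ q * δ ^ 2 := by nlinarith [Nat.cast_nonneg (α := ℝ) q]
      _ ≤ (a * δ) ^ 2 := by rw [mul_pow]; gcongr; nlinarith
      _ = ε ^ 2 / 2 := haδ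
  rw [integral_sq_sqrt_sub_sqrt_bracket μ hb (by linarith) a]
  linarith [cosh_le_one_add_sq (x := t * a) (by nlinarith),
    one_sub_le_inv_sqrt_cosh_pow (5 / 8 * t) q]
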